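/- arXiv:1303.1743 — 3 statements merged into one kernel-verified Lean document; each statement's English description precedes it below -/
import Mathlib

section
/- Let p : ℝ^d → ℝ be a probability density belonging to the Hölder class H₂^{(α)}(K) for some 0 < α ≤ 1 and K > 0, i.e., (∫_{ℝ^d} (p(x+h) − p(x))² dx)^{1/2} ≤ K|h|^α for all h with |h| ≤ 1. Let X, Y be independent random vectors with density p, let q_{2,ε} := P(|X − Y| ≤ ε) and b_ε(d) denote the volume of the Euclidean ball of radius ε in ℝ^d, and let q̃_{2,ε} := q_{2,ε}/b_ε(d) and q₂ := ∫_{ℝ^d} p(x)² dx. Then for all 0 < ε ≤ 1, |q̃_{2,ε} − q₂| ≤ (1/2) K² ε^{2α}. -/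
/-! Write `I(h) = ∫ p(x+h) p(x) dx` for the autocorrelation of `p`. Translating each ball to the
origin and applying Fubini turns `q_{2,ε}` into `∫_{|h| ≤ ε} I(h) dh`, so `q̃_{2,ε}` is the average
of `I` over the ε-ball. Expanding the square gives `q₂ - I(h) = ½ ∫ (p(x+h) - p(x))² dx`, which the
Hölder condition bounds between `0` and `½ K² ε^{2α}` for `|h| ≤ ε`; averaging over the ball gives
the same bounds for `q₂ - q̃_{2,ε}`. -/

open MeasureTheory Real Metric

section Autocorrelation

variable {E : Type*} [AddCommGroup E] [MeasurableSpace E] [MeasurableAdd₂ E]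
  {μ : Measure E} [μ.IsAddLeftInvariant] {p : E → ℝ}

variable (μ) in
noncomputable def autocorrelation (p : E → ℝ) (h : E) : ℝ := ∫ x, p (x + h) * p x ∂μ

theorem integral_translate_sub_sq (hp : MemLp p 2 μ) (h : E) :
    ∫ x, (p (x + h) - p x) ^ 2 ∂μ = 2 * (∫ x, p x ^ 2 ∂μ - autocorrelation μ p h) := by
  have hph : MemLp (fun x => p (x + h)) 2 μ :=
    hp.comp_measurePreserving (measurePreserving_add_right μ h)
  have hmul : Integrable (fun x => p (x + h) * p x) μ := hph.integrable_mul hp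
  have hexpand : (fun x => (p (x + h) - p x) ^ 2)
      = fun x => p (x + h) ^ 2 + p x ^ 2 - 2 * (p (x + h) * p x) := by
    ext x; ring
  have hsum : Integrable (fun x => p (x + h) ^ 2 + p x ^ 2) μ :=
    hph.integrable_sq.add hp.integrable_sq
  rw [hexpand, integral_sub hsum (hmul.const_mul 2),
    integral_add hph.integrable_sq hp.integrable_sq, integral_const_mul,
    integral_add_right_eq_self (fun x => p x ^ 2) h, autocorrelation]
  ring

theorem integrable_translate_mul_prod [SFinite μ] (hp : Integrable p μ) :
    Integrable (fun z : E × E => p (z.1 + z.2) * p z.1) (μ.prod μ) :=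
  (measurePreserving_prod_add μ μ).integrable_comp_of_integrable (hp.mul_prod hp).swap

theorem integrableOn_autocorrelation [SFinite μ] (hp : Integrable p μ) (s : Set E) :
    IntegrableOn (autocorrelation μ p) s μ :=
  ((integrable_translate_mul_prod hp).mono_measure
    (Measure.prod_mono le_rfl Measure.restrict_le_self)).integral_prod_right

theorem integral_setIntegral_translate_mul [SFinite μ] (hp : Integrable p μ) (s : Set E) :
    ∫ x, (∫ h in s, p (x + h) ∂μ) * p x ∂μ = ∫ h in s, autocorrelation μ p h ∂μ := by
  simp_rw [← integral_mul_const]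
  exact integral_integral_swap ((integrable_translate_mul_prod hp).mono_measure
    (Measure.prod_mono le_rfl Measure.restrict_le_self))

end Autocorrelation

theorem setIntegral_closedBall_eq_translate {E : Type*} [NormedAddCommGroup E]
    [MeasurableSpace E] [BorelSpace E] (μ : Measure E) [μ.IsAddLeftInvariant]
    (p : E → ℝ) (x : E) (r : ℝ) :
    ∫ y in closedBall x r, p y ∂μ = ∫ h in closedBall 0 r, p (x + h) ∂μ := by
  rw [← (measurePreserving_add_left μ x).setIntegral_preimage_emb
    (MeasurableEquiv.addLeft x).measurableEmbedding, preimage_add_closedBall, sub_self]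

theorem abs_setIntegral_div_measureReal_sub_le {α : Type*} [MeasurableSpace α]
    {μ : Measure α} {s : Set α} {f : α → ℝ} {c C : ℝ} (hs₀ : μ s ≠ 0) (hs : μ s ≠ ⊤)
    (hf : IntegrableOn f s μ) (hfC : ∀ x ∈ s, |f x - c| ≤ C) :
    |(∫ x in s, f x ∂μ) / μ.real s - c| ≤ C := by
  have hpos : 0 < μ.real s := ENNReal.toReal_pos hs₀ hs
  have hdiff : (∫ x in s, f x ∂μ) / μ.real s - c = (∫ x in s, (f x - c) ∂μ) / μ.real s := by
    rw [integral_sub hf (integrableOn_const hs), setIntegral_const, smul_eq_mul]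
    field_simp
  rw [hdiff, abs_div, abs_of_pos hpos, div_le_iff₀ hpos]
  exact norm_setIntegral_le_of_norm_le_const hs.lt_top fun x hx =>
    (norm_eq_abs _).trans_le (hfC x hx)

theorem le_sq_mul_rpow_of_rpow_half_le {g K t ε α : ℝ} (hα : 0 ≤ α)
    (ht : 0 ≤ t) (htε : t ≤ ε) (h : g ^ (1 / 2 : ℝ) ≤ K * t ^ α) :
    g ≤ K ^ 2 * ε ^ (2 * α) := by
  rw [← sqrt_eq_rpow, sqrt_le_iff] at h
  calc g ≤ (K * t ^ α) ^ 2 := h.2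
    _ = K ^ 2 * t ^ (2 * α) := by rw [mul_pow, mul_comm 2 α, ← rpow_mul_natCast ht]; norm_num
    _ ≤ K ^ 2 * ε ^ (2 * α) := by gcongr

theorem stmt_2_general (d : ℕ) (α K : ℝ) (hα : 0 < α)
    (p : EuclideanSpace ℝ (Fin d) → ℝ)
    (hpi : Integrable p)
    (hp2 : Integrable (fun x => p x ^ 2))
    (hHolder : ∀ h : EuclideanSpace ℝ (Fin d), ‖h‖ ≤ 1 →
      (∫ x, (p (x + h) - p x) ^ 2) ^ ((1 : ℝ) / 2) ≤ K * ‖h‖ ^ α) :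
    ∀ ε : ℝ, 0 < ε → ε ≤ 1 →
      |(∫ x, (∫ y in Metric.closedBall x ε, p y) * p x) /
          (volume (Metric.closedBall (0 : EuclideanSpace ℝ (Fin d)) ε)).toReal
        - ∫ x, p x ^ 2| ≤ 1 / 2 * K ^ 2 * ε ^ (2 * α) := by
  intro ε hε hε1
  have hp : MemLp p 2 volume := (memLp_two_iff_integrable_sq hpi.aestronglyMeasurable).2 hp2
  have hball : ∀ x, (∫ y in closedBall x ε, p y) * p x
      = (∫ h in closedBall 0 ε, p (x + h)) * p x :=
    fun x => by rw [setIntegral_closedBall_eq_translate]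
  rw [integral_congr_ae (ae_of_all _ hball), integral_setIntegral_translate_mul hpi]
  refine abs_setIntegral_div_measureReal_sub_le (measure_closedBall_pos _ _ hε).ne'
    measure_closedBall_lt_top.ne (integrableOn_autocorrelation hpi _) fun h hh => ?_
  have hhε : ‖h‖ ≤ ε := mem_closedBall_zero_iff.1 hh
  have hsq := integral_translate_sub_sq hp h
  have hsq_nonneg : 0 ≤ ∫ x, (p (x + h) - p x) ^ 2 := integral_nonneg fun _ => sq_nonneg _
  have hsq_le := le_sq_mul_rpow_of_rpow_half_le hα.le (norm_nonneg h) hhε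
    (hHolder h (hhε.trans hε1))
  exact abs_le.2 ⟨by linarith, by linarith⟩

/-- Bias bound for the normalized ε-coincidence probability under an L²-Hölder
condition: if the density `p ∈ H₂^{(α)}(K)`, then
`|q_{2,ε}/b_ε(d) − ∫ p²| ≤ (1/2) K² ε^{2α}` for all `0 < ε ≤ 1`. -/
theorem stmt_2 (d : ℕ) (hd : 0 < d) (α K : ℝ) (hα : 0 < α) (hα1 : α ≤ 1) (hK : 0 < K)
    (p : EuclideanSpace ℝ (Fin d) → ℝ)
    (hpm : Measurable p) (hpn : ∀ x, 0 ≤ p x)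
    (hpi : Integrable p) (hp1 : ∫ x, p x = 1)
    (hp2 : Integrable (fun x => p x ^ 2))
    (hHolder : ∀ h : EuclideanSpace ℝ (Fin d), ‖h‖ ≤ 1 →
      (∫ x, (p (x + h) - p x) ^ 2) ^ ((1 : ℝ) / 2) ≤ K * ‖h‖ ^ α) :
    ∀ ε : ℝ, 0 < ε → ε ≤ 1 →
      |(∫ x, (∫ y in Metric.closedBall x ε, p y) * p x) /
          (volume (Metric.closedBall (0 : EuclideanSpace ℝ (Fin d)) ε)).toReal
        - ∫ x, p x ^ 2| ≤ 1 / 2 * K ^ 2 * ε ^ (2 * α) :=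
  stmt_2_general d α K hα p hpi hp2 hHolder
end

section
/- Let X be a random vector in ℝ^d with density p ∈ L²(ℝ^d), and for ε > 0 let p_{X,ε}(x) = P(X ∈ B_ε(x)) be the ε-ball probability. If p ∈ L³(ℝ^d) and X₁, X₂ are any two (possibly dependent) random vectors each with marginal density p, then E[p_{X,ε}(X₁) p_{X,ε}(X₂)] / b_ε(d)² → E[p(X₁) p(X₂)] as ε → 0, provided E[p(X₁)p(X₂)] is finite and the joint density of (X₁,X₂) makes all expectations well defined. -/
/-!
Write `A_ε f (x)` for the average of `f` over `B_ε(x)`. Hölder's inequality on each ball and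
Fubini make `A_ε` a contraction of `Lᵖ` for `1 ≤ p < ∞`; for continuous compactly supported `g`,
`A_ε g → g` uniformly with supports in a fixed compact set, so by density `A_ε p → p` in `L³`.
If `X` has density `p`, then `E|F(X)|² = ∫ p F² ≤ ‖p‖₃ ‖F‖₃²`, hence `A_ε p (Xᵢ) → p (Xᵢ)` in
`L²(P)`, and `E[U₁ U₂]` is continuous in `(U₁, U₂) ∈ L²(P) × L²(P)` by Cauchy–Schwarz applied to
the cross terms.
-/

open MeasureTheory Metric Filter Topology
open scoped ENNReal RealInnerProductSpace

namespace MeasureTheory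

section BallAverage

variable {E F : Type*} [NormedAddCommGroup E] [MeasurableSpace E] [BorelSpace E]
  {μ : Measure E} [μ.IsAddHaarMeasure] [NormedAddCommGroup F] [NormedSpace ℝ F] {ε : ℝ}

noncomputable def ballAverage (μ : Measure E) (ε : ℝ) (f : E → F) (x : E) : F :=
  ⨍ y in closedBall x ε, f y ∂μ

lemma ballAverage_eq_smul_integral (f : E → F) (x : E) :
    ballAverage μ ε f x = (μ.real (closedBall 0 ε))⁻¹ • ∫ y in closedBall x ε, f y ∂μ := by
  rw [ballAverage, setAverage_eq, measureReal_def, measureReal_def,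
    Measure.addHaar_closedBall_center]

variable [ProperSpace E]

omit [μ.IsAddHaarMeasure] in
lemma measurableSet_mem_closedBall (ε : ℝ) :
    MeasurableSet {q : E × E | q.2 ∈ closedBall q.1 ε} :=
  (isClosed_le (continuous_snd.dist continuous_fst) continuous_const).measurableSet

lemma stronglyMeasurable_ballAverage {f : E → F} (hf : StronglyMeasurable f) :
    StronglyMeasurable (ballAverage μ ε f) := by
  have hint : StronglyMeasurable fun x => ∫ y in closedBall x ε, f y ∂μ := by
    simp_rw [← integral_indicator measurableSet_closedBall]
    exact ((hf.comp_measurable measurable_snd).indicator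
      (measurableSet_mem_closedBall ε)).integral_prod_right'
  rw [funext (ballAverage_eq_smul_integral f)]
  exact hint.const_smul _

lemma lintegral_setLIntegral_closedBall {h : E → ℝ≥0∞} (hh : Measurable h) :
    ∫⁻ x, ∫⁻ y in closedBall x ε, h y ∂μ ∂μ = μ (closedBall 0 ε) * ∫⁻ y, h y ∂μ := by
  simp_rw [← lintegral_indicator measurableSet_closedBall]
  rw [lintegral_lintegral_swap (f := fun x y => (closedBall x ε).indicator h y)
    ((hh.comp measurable_snd).indicator (measurableSet_mem_closedBall ε)).aemeasurable,
    ← lintegral_const_mul' _ _ measure_closedBall_lt_top.ne]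
  refine lintegral_congr fun y => ?_
  have hswap : ∀ x, (closedBall x ε).indicator h y = (closedBall y ε).indicator (fun _ => h y) x :=
    fun x => by simp only [Set.indicator, mem_closedBall, dist_comm]
  simp_rw [hswap]
  rw [lintegral_indicator_const measurableSet_closedBall, Measure.addHaar_closedBall_center,
    mul_comm]

lemma enorm_ballAverage_rpow_le {p : ℝ≥0∞} (hp1 : 1 ≤ p) (hp : p ≠ ∞) (hε : 0 < ε) {f : E → F}
    (hf : AEStronglyMeasurable f μ) (x : E) :
    ‖ballAverage μ ε f x‖ₑ ^ p.toReal
      ≤ (μ (closedBall 0 ε))⁻¹ * ∫⁻ y in closedBall x ε, ‖f y‖ₑ ^ p.toReal ∂μ := by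
  set V := μ (closedBall 0 ε)
  set I := ∫⁻ y in closedBall x ε, ‖f y‖ₑ ^ p.toReal ∂μ
  have hV0 : V ≠ 0 := (measure_closedBall_pos μ 0 hε).ne'
  have hVt : V ≠ ∞ := measure_closedBall_lt_top.ne
  have hr : 0 < p.toReal := ENNReal.toReal_pos (zero_lt_one.trans_le hp1).ne' hp
  have holder : ∫⁻ y in closedBall x ε, ‖f y‖ₑ ∂μ ≤ I ^ (1 / p.toReal) * V ^ (1 - 1 / p.toReal) := by
    have := eLpNorm_le_eLpNorm_mul_rpow_measure_univ hp1 (hf.restrict (s := closedBall x ε))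
    rwa [eLpNorm_one_eq_lintegral_enorm, eLpNorm_eq_lintegral_rpow_enorm_toReal (by positivity) hp,
      Measure.restrict_apply_univ, Measure.addHaar_closedBall_center, ENNReal.toReal_one,
      div_one] at this
  have hV : V⁻¹ * V ^ (1 - 1 / p.toReal) = V⁻¹ ^ (1 / p.toReal) := by
    rw [← ENNReal.rpow_neg_one, ← ENNReal.rpow_add _ _ hV0 hVt, ← ENNReal.rpow_mul]
    ring_nf
  calc ‖ballAverage μ ε f x‖ₑ ^ p.toReal
      ≤ (V⁻¹ * ∫⁻ y in closedBall x ε, ‖f y‖ₑ ∂μ) ^ p.toReal := by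
        rw [ballAverage_eq_smul_integral, enorm_smul, measureReal_def,
          enorm_inv (ENNReal.toReal_ne_zero.2 ⟨hV0, hVt⟩),
          Real.enorm_of_nonneg ENNReal.toReal_nonneg, ENNReal.ofReal_toReal hVt]
        gcongr
        exact enorm_integral_le_lintegral_enorm _
    _ ≤ (V⁻¹ * (I ^ (1 / p.toReal) * V ^ (1 - 1 / p.toReal))) ^ p.toReal := by gcongr
    _ = V⁻¹ * I := by
        rw [mul_left_comm, hV, ← ENNReal.mul_rpow_of_nonneg _ _ (by positivity),
          ← ENNReal.rpow_mul, one_div_mul_cancel hr.ne', ENNReal.rpow_one, mul_comm]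

lemma eLpNorm_ballAverage_le {p : ℝ≥0∞} (hp1 : 1 ≤ p) (hp : p ≠ ∞) (hε : 0 < ε) {f : E → F}
    (hf : StronglyMeasurable f) : eLpNorm (ballAverage μ ε f) p μ ≤ eLpNorm f p μ := by
  have hp0 : p ≠ 0 := (zero_lt_one.trans_le hp1).ne'
  have hV0 : μ (closedBall 0 ε) ≠ 0 := (measure_closedBall_pos μ 0 hε).ne'
  rw [eLpNorm_eq_lintegral_rpow_enorm_toReal hp0 hp, eLpNorm_eq_lintegral_rpow_enorm_toReal hp0 hp]
  gcongr ?_ ^ _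
  calc ∫⁻ x, ‖ballAverage μ ε f x‖ₑ ^ p.toReal ∂μ
      ≤ ∫⁻ x, (μ (closedBall 0 ε))⁻¹ * ∫⁻ y in closedBall x ε, ‖f y‖ₑ ^ p.toReal ∂μ ∂μ :=
        lintegral_mono (enorm_ballAverage_rpow_le hp1 hp hε hf.aestronglyMeasurable)
    _ = ∫⁻ x, ‖f x‖ₑ ^ p.toReal ∂μ := by
        rw [lintegral_const_mul' _ _ (ENNReal.inv_ne_top.2 hV0),
          lintegral_setLIntegral_closedBall (hf.enorm.pow_const _),
          ENNReal.inv_mul_cancel_left hV0 measure_closedBall_lt_top.ne]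

lemma memLp_ballAverage {p : ℝ≥0∞} (hp1 : 1 ≤ p) (hp : p ≠ ∞) (hε : 0 < ε) {f : E → F}
    (hf : MemLp f p μ) (hfm : StronglyMeasurable f) : MemLp (ballAverage μ ε f) p μ :=
  ⟨(stronglyMeasurable_ballAverage hfm).aestronglyMeasurable,
    (eLpNorm_ballAverage_le hp1 hp hε hfm).trans_lt hf.eLpNorm_lt_top⟩

lemma ballAverage_sub {f g : E → F} (hf : LocallyIntegrable f μ) (hg : LocallyIntegrable g μ) :
    ballAverage μ ε (f - g) = ballAverage μ ε f - ballAverage μ ε g := by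
  ext x
  simp only [ballAverage_eq_smul_integral, Pi.sub_apply, ← smul_sub]
  rw [integral_sub (hf.integrableOn_isCompact (isCompact_closedBall x ε))
    (hg.integrableOn_isCompact (isCompact_closedBall x ε))]

omit [BorelSpace E] in
lemma norm_ballAverage_sub_le [CompleteSpace F] (hε : 0 < ε) {g : E → F} {x : E} {η : ℝ}
    (hg : IntegrableOn g (closedBall x ε) μ) (hη : ∀ y ∈ closedBall x ε, ‖g y - g x‖ ≤ η) :
    ‖ballAverage μ ε g x - g x‖ ≤ η := by
  have hV0 : μ (closedBall x ε) ≠ 0 := (measure_closedBall_pos μ x hε).ne'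
  have hVt : μ (closedBall x ε) ≠ ∞ := measure_closedBall_lt_top.ne
  have hV : 0 < μ.real (closedBall x ε) := ENNReal.toReal_pos hV0 hVt
  have hsub : ballAverage μ ε g x - g x = ⨍ y in closedBall x ε, (g y - g x) ∂μ := by
    rw [ballAverage, setAverage_eq, setAverage_eq, integral_sub hg (integrableOn_const hVt),
      smul_sub, setIntegral_const, smul_smul, inv_mul_cancel₀ hV.ne', one_smul]
  rw [hsub, setAverage_eq, norm_smul, norm_inv, Real.norm_of_nonneg hV.le, inv_mul_le_iff₀ hV]
  exact norm_setIntegral_le_of_norm_le_const hVt.lt_top hη |>.trans_eq (mul_comm _ _)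

omit [ProperSpace E] in
lemma support_ballAverage_subset (f : E → F) :
    Function.support (ballAverage μ ε f) ⊆ cthickening ε (Function.support f) := by
  intro x hx
  by_contra hxK
  refine hx ?_
  rw [ballAverage_eq_smul_integral, setIntegral_eq_zero_of_forall_eq_zero, smul_zero]
  intro y hy
  by_contra hfy
  exact hxK (mem_cthickening_of_dist_le x y ε _ hfy (mem_closedBall'.1 hy))

lemma tendsto_eLpNorm_ballAverage_sub_of_hasCompactSupport [CompleteSpace F] {p : ℝ≥0∞}
    {g : E → F} (hg : Continuous g) (hgc : HasCompactSupport g) :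
    Tendsto (fun ε => eLpNorm (ballAverage μ ε g - g) p μ) (𝓝[>] 0) (𝓝 0) := by
  set K := cthickening 1 (tsupport g)
  set C := μ K ^ p.toReal⁻¹
  have hC : C ≠ ∞ :=
    ENNReal.rpow_ne_top_of_nonneg (by positivity) hgc.cthickening.measure_lt_top.ne
  have hbound : ∀ η > 0, ∀ᶠ ε in 𝓝[>] 0,
      eLpNorm (ballAverage μ ε g - g) p μ ≤ C * ENNReal.ofReal η := by
    intro η hη
    obtain ⟨δ, hδ, hgδ⟩ :=
      Metric.uniformContinuous_iff.1 (hgc.uniformContinuous_of_continuous hg) η hη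
    filter_upwards [Ioo_mem_nhdsGT (lt_min hδ one_pos)] with ε ⟨hε, hεδ⟩
    have hsupp : Function.support (ballAverage μ ε g - g) ⊆ K :=
      (Function.support_sub _ _).trans <| Set.union_subset
        ((support_ballAverage_subset g).trans <|
          (cthickening_mono (hεδ.le.trans (min_le_right _ _)) _).trans
            (cthickening_subset_of_subset _ (subset_tsupport g)))
        ((subset_tsupport g).trans (self_subset_cthickening _))
    rw [← eLpNorm_restrict_eq_of_support_subset hsupp]
    refine (eLpNorm_le_of_ae_bound (C := η) (ae_of_all _ fun x => ?_)).trans_eq ?_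
    · refine norm_ballAverage_sub_le hε (hg.continuousOn.integrableOn_compact
        (isCompact_closedBall x ε)) fun y hy => ?_
      rw [← dist_eq_norm]
      exact (hgδ ((mem_closedBall.1 hy).trans_lt (hεδ.trans_le (min_le_left _ _)))).le
    · rw [Measure.restrict_apply_univ]
  have hCη : Tendsto (fun η => C * ENNReal.ofReal η) (𝓝[>] 0) (𝓝 0) := by
    have : Tendsto ENNReal.ofReal (𝓝[>] 0) (𝓝 0) := by
      simpa using (ENNReal.continuous_ofReal.tendsto 0).mono_left nhdsWithin_le_nhds
    simpa using ENNReal.Tendsto.const_mul this (Or.inr hC)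
  rw [ENNReal.tendsto_nhds_zero]
  intro e he
  obtain ⟨η, hηe, hη⟩ := ((hCη.eventually (gt_mem_nhds he)).and self_mem_nhdsWithin).exists
  filter_upwards [hbound η hη] with ε hε using hε.trans hηe.le

theorem tendsto_eLpNorm_ballAverage_sub [CompleteSpace F] {p : ℝ≥0∞} (hp1 : 1 ≤ p) (hp : p ≠ ∞)
    {f : E → F} (hf : MemLp f p μ) (hfm : StronglyMeasurable f) :
    Tendsto (fun ε => eLpNorm (ballAverage μ ε f - f) p μ) (𝓝[>] 0) (𝓝 0) := by
  rw [ENNReal.tendsto_nhds_zero]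
  intro e he
  have he3 : 0 < e / 3 := ENNReal.div_pos he.ne' ENNReal.ofNat_ne_top
  obtain ⟨g, hgc, hfg, hg, hgp⟩ := hf.exists_hasCompactSupport_eLpNorm_sub_le hp he3.ne'
  filter_upwards [ENNReal.tendsto_nhds_zero.1
    (tendsto_eLpNorm_ballAverage_sub_of_hasCompactSupport (μ := μ) (p := p) hg hgc) _ he3,
    self_mem_nhdsWithin] with ε hεg hε
  have hfgm : StronglyMeasurable (f - g) := hfm.sub hg.stronglyMeasurable
  have hsplit : ballAverage μ ε f - f
      = ballAverage μ ε (f - g) + (ballAverage μ ε g - g) + (g - f) := by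
    rw [ballAverage_sub (hf.locallyIntegrable hp1) (hgp.locallyIntegrable hp1)]
    abel
  have m1 : AEStronglyMeasurable (ballAverage μ ε (f - g)) μ :=
    (stronglyMeasurable_ballAverage hfgm).aestronglyMeasurable
  have m2 : AEStronglyMeasurable (ballAverage μ ε g - g) μ :=
    ((stronglyMeasurable_ballAverage hg.stronglyMeasurable).sub
      hg.stronglyMeasurable).aestronglyMeasurable
  have m3 : AEStronglyMeasurable (g - f) μ := hg.aestronglyMeasurable.sub hfm.aestronglyMeasurable
  rw [hsplit]
  calc _ ≤ eLpNorm (ballAverage μ ε (f - g) + (ballAverage μ ε g - g)) p μ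
        + eLpNorm (g - f) p μ := eLpNorm_add_le (m1.add m2) m3 hp1
    _ ≤ eLpNorm (ballAverage μ ε (f - g)) p μ + eLpNorm (ballAverage μ ε g - g) p μ
        + eLpNorm (g - f) p μ := by gcongr; exact eLpNorm_add_le m1 m2 hp1
    _ ≤ e / 3 + e / 3 + e / 3 := by
        gcongr
        · exact (eLpNorm_ballAverage_le hp1 hp hε hfgm).trans hfg
        · rwa [eLpNorm_sub_comm]
    _ = e := ENNReal.add_thirds e

end BallAverage

section WeightedL2

variable {α Ω G : Type*} [MeasurableSpace α] [MeasurableSpace Ω] {μ : Measure α} {P : Measure Ω}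
  [NormedAddCommGroup G] {X : Ω → α} {w : α → ℝ}

lemma eLpNorm_two_withDensity_le (hw : AEMeasurable w μ) {F : α → G}
    (hF : AEStronglyMeasurable F μ) :
    eLpNorm F 2 (μ.withDensity fun x => ENNReal.ofReal (w x))
      ≤ eLpNorm w 3 μ ^ (1 / 2 : ℝ) * eLpNorm F 3 μ := by
  have h3 : (3 : ℝ).HolderConjugate (3 / 2) := ⟨by norm_num, by norm_num, by norm_num⟩
  have hholder := ENNReal.lintegral_mul_le_Lp_mul_Lq μ h3 hw.enorm (hF.enorm.pow_const (2 : ℝ))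
  have hw3 : eLpNorm w 3 μ = (∫⁻ x, ‖w x‖ₑ ^ (3 : ℝ) ∂μ) ^ (1 / 3 : ℝ) := by
    simp [eLpNorm_eq_lintegral_rpow_enorm_toReal]
  have hF3 : eLpNorm F 3 μ ^ (2 : ℝ)
      = (∫⁻ x, (‖F x‖ₑ ^ (2 : ℝ)) ^ (3 / 2 : ℝ) ∂μ) ^ (1 / (3 / 2) : ℝ) := by
    simp_rw [eLpNorm_eq_lintegral_rpow_enorm_toReal three_ne_zero ENNReal.ofNat_ne_top,
      ← ENNReal.rpow_mul]
    norm_num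
  rw [eLpNorm_eq_lintegral_rpow_enorm_toReal two_ne_zero ENNReal.ofNat_ne_top,
    lintegral_withDensity_eq_lintegral_mul₀ hw.ennreal_ofReal (hF.enorm.pow_const _)]
  calc (∫⁻ x, (ENNReal.ofReal ∘ w * fun x => ‖F x‖ₑ ^ (2 : ℝ≥0∞).toReal) x ∂μ)
        ^ (1 / (2 : ℝ≥0∞).toReal)
      ≤ (eLpNorm w 3 μ * eLpNorm F 3 μ ^ (2 : ℝ)) ^ (1 / 2 : ℝ) := by
        simp only [ENNReal.toReal_ofNat]
        gcongr
        refine (lintegral_mono fun x => ?_).trans (hholder.trans_eq (by rw [hw3, hF3]))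
        simp only [Pi.mul_apply, Function.comp_apply]
        gcongr
        exact Real.ofReal_le_enorm (w x)
    _ = eLpNorm w 3 μ ^ (1 / 2 : ℝ) * eLpNorm F 3 μ := by
        rw [ENNReal.mul_rpow_of_nonneg _ _ (by norm_num), ← ENNReal.rpow_mul]
        norm_num

lemma eLpNorm_comp_le_of_map_eq_withDensity (hX : AEMeasurable X P) (hw : AEMeasurable w μ)
    (hXw : P.map X = μ.withDensity fun x => ENNReal.ofReal (w x)) {F : α → G}
    (hF : AEStronglyMeasurable F μ) :
    eLpNorm (F ∘ X) 2 P ≤ eLpNorm w 3 μ ^ (1 / 2 : ℝ) * eLpNorm F 3 μ := by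
  rw [← eLpNorm_map_measure (hXw ▸ hF.mono_ac (withDensity_absolutelyContinuous _ _)) hX, hXw]
  exact eLpNorm_two_withDensity_le hw hF

lemma MemLp.comp_of_map_eq_withDensity {F : α → G} (hF : MemLp F 3 μ) (hX : AEMeasurable X P)
    (hw : MemLp w 3 μ) (hXw : P.map X = μ.withDensity fun x => ENNReal.ofReal (w x)) :
    MemLp (F ∘ X) 2 P :=
  ⟨(hXw ▸ hF.1.mono_ac (withDensity_absolutelyContinuous _ _)).comp_aemeasurable hX,
    (eLpNorm_comp_le_of_map_eq_withDensity hX hw.1.aemeasurable hXw hF.1).trans_lt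
      (ENNReal.mul_lt_top (ENNReal.rpow_lt_top_of_nonneg (by norm_num) hw.eLpNorm_ne_top)
        hF.eLpNorm_lt_top)⟩

lemma tendsto_eLpNorm_comp_sub_of_map_eq_withDensity {ι : Type*} {l : Filter ι}
    (hX : AEMeasurable X P) (hw : MemLp w 3 μ)
    (hXw : P.map X = μ.withDensity fun x => ENNReal.ofReal (w x)) {F : ι → α → G} {f : α → G}
    (hFf_meas : ∀ᶠ i in l, AEStronglyMeasurable (F i - f) μ)
    (hFf : Tendsto (fun i => eLpNorm (F i - f) 3 μ) l (𝓝 0)) :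
    Tendsto (fun i => eLpNorm (F i ∘ X - f ∘ X) 2 P) l (𝓝 0) := by
  have hC : eLpNorm w 3 μ ^ (1 / 2 : ℝ) ≠ ∞ :=
    ENNReal.rpow_ne_top_of_nonneg (by norm_num) hw.eLpNorm_ne_top
  have hbound := ENNReal.Tendsto.const_mul hFf (Or.inr hC)
  rw [mul_zero] at hbound
  refine tendsto_of_tendsto_of_tendsto_of_le_of_le' tendsto_const_nhds hbound
    (Eventually.of_forall fun _ => zero_le) ?_
  filter_upwards [hFf_meas] with i hi
  have hcomp : F i ∘ X - f ∘ X = (F i - f) ∘ X := rfl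
  rw [hcomp]
  exact eLpNorm_comp_le_of_map_eq_withDensity hX hw.1.aemeasurable hXw hi

end WeightedL2

section L2Pairing

variable {Ω : Type*} [MeasurableSpace Ω] {P : Measure Ω}

lemma abs_integral_mul_le_eLpNorm_mul_eLpNorm {u v : Ω → ℝ} (hu : MemLp u 2 P)
    (hv : MemLp v 2 P) :
    |∫ ω, u ω * v ω ∂P| ≤ (eLpNorm u 2 P).toReal * (eLpNorm v 2 P).toReal := by
  have h := abs_real_inner_le_norm (hu.toLp u) (hv.toLp v)
  rwa [L2.inner_def, Lp.norm_toLp, Lp.norm_toLp, integral_congr_ae ?_] at h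
  filter_upwards [hu.coeFn_toLp, hv.coeFn_toLp] with ω hu' hv'
  rw [RCLike.inner_apply', hu', hv', conj_trivial]

lemma abs_integral_mul_sub_integral_mul_le {F G f g : Ω → ℝ} (hF : MemLp F 2 P)
    (hG : MemLp G 2 P) (hf : MemLp f 2 P) (hg : MemLp g 2 P) :
    |∫ ω, F ω * G ω ∂P - ∫ ω, f ω * g ω ∂P|
      ≤ (eLpNorm (F - f) 2 P).toReal * (eLpNorm G 2 P).toReal
        + (eLpNorm f 2 P).toReal * (eLpNorm (G - g) 2 P).toReal := by
  have hsplit : ∫ ω, F ω * G ω ∂P - ∫ ω, f ω * g ω ∂P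
      = ∫ ω, (F - f) ω * G ω ∂P + ∫ ω, f ω * (G - g) ω ∂P := by
    have i1 : Integrable (fun ω => F ω * G ω) P := hF.integrable_mul hG
    have i2 : Integrable (fun ω => f ω * g ω) P := hf.integrable_mul hg
    have i3 : Integrable (fun ω => (F - f) ω * G ω) P := (hF.sub hf).integrable_mul hG
    have i4 : Integrable (fun ω => f ω * (G - g) ω) P := hf.integrable_mul (hG.sub hg)
    rw [← integral_sub i1 i2, ← integral_add i3 i4]
    congr 1
    ext ω
    simp only [Pi.sub_apply]
    ring
  rw [hsplit]
  exact (abs_add_le _ _).trans (add_le_add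
    (abs_integral_mul_le_eLpNorm_mul_eLpNorm (hF.sub hf) hG)
    (abs_integral_mul_le_eLpNorm_mul_eLpNorm hf (hG.sub hg)))

theorem tendsto_integral_mul_of_tendsto_eLpNorm {ι : Type*} {l : Filter ι} {F G : ι → Ω → ℝ}
    {f g : Ω → ℝ} (hF : ∀ᶠ i in l, MemLp (F i) 2 P) (hG : ∀ᶠ i in l, MemLp (G i) 2 P)
    (hf : MemLp f 2 P) (hg : MemLp g 2 P)
    (hFf : Tendsto (fun i => eLpNorm (F i - f) 2 P) l (𝓝 0))
    (hGg : Tendsto (fun i => eLpNorm (G i - g) 2 P) l (𝓝 0)) :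
    Tendsto (fun i => ∫ ω, F i ω * G i ω ∂P) l (𝓝 (∫ ω, f ω * g ω ∂P)) := by
  have toReal_tendsto {u : ι → ℝ≥0∞} (hu : Tendsto u l (𝓝 0)) :
      Tendsto (fun i => (u i).toReal) l (𝓝 0) :=
    ENNReal.toReal_zero ▸ (ENNReal.tendsto_toReal ENNReal.zero_ne_top).comp hu
  have hbound : Tendsto (fun i => (eLpNorm (F i - f) 2 P).toReal
      * ((eLpNorm (G i - g) 2 P).toReal + (eLpNorm g 2 P).toReal)
      + (eLpNorm f 2 P).toReal * (eLpNorm (G i - g) 2 P).toReal) l (𝓝 0) := by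
    simpa using ((toReal_tendsto hFf).mul ((toReal_tendsto hGg).add_const _)).add
      ((toReal_tendsto hGg).const_mul _)
  rw [tendsto_iff_dist_tendsto_zero]
  refine squeeze_zero' (Eventually.of_forall fun _ => dist_nonneg) ?_ hbound
  filter_upwards [hF, hG] with i hFi hGi
  refine (abs_integral_mul_sub_integral_mul_le hFi hGi hf hg).trans ?_
  have hGi_le : eLpNorm (G i) 2 P ≤ eLpNorm (G i - g) 2 P + eLpNorm g 2 P := by
    simpa using eLpNorm_add_le (hGi.sub hg).1 hg.1 one_le_two
  gcongr
  exact ENNReal.toReal_le_add hGi_le (hGi.sub hg).eLpNorm_ne_top hg.eLpNorm_ne_top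

end L2Pairing

end MeasureTheory

theorem stmt_7_general (d : ℕ) {Ω : Type*} [MeasurableSpace Ω]
    (P : Measure Ω)
    (X1 X2 : Ω → EuclideanSpace ℝ (Fin d)) (hX1 : Measurable X1) (hX2 : Measurable X2)
    (p : EuclideanSpace ℝ (Fin d) → ℝ) (hpm : Measurable p)
    (hp3 : Integrable (fun x => p x ^ 3))
    (hd1 : Measure.map X1 P = volume.withDensity (fun x => ENNReal.ofReal (p x)))
    (hd2 : Measure.map X2 P = volume.withDensity (fun x => ENNReal.ofReal (p x))) :
    Tendsto (fun ε : ℝ =>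
        (∫ ω, (∫ y in Metric.closedBall (X1 ω) ε, p y) *
            (∫ y in Metric.closedBall (X2 ω) ε, p y) ∂P) /
          ((volume (Metric.closedBall (0 : EuclideanSpace ℝ (Fin d)) ε)).toReal) ^ 2)
      (nhdsWithin 0 (Set.Ioi 0)) (𝓝 (∫ ω, p (X1 ω) * p (X2 ω) ∂P)) := by
  have hp : MemLp p 3 volume :=
    (integrable_norm_rpow_iff hpm.aestronglyMeasurable three_ne_zero ENNReal.ofNat_ne_top).1
      (hp3.norm.congr (Eventually.of_forall fun x => by
        simp only [norm_pow, ENNReal.toReal_ofNat, Real.rpow_ofNat]))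
  set A := fun ε => ballAverage volume ε p
  have hA_memLp : ∀ᶠ ε in 𝓝[>] 0, MemLp (A ε) 3 volume := by
    filter_upwards [self_mem_nhdsWithin] with ε hε
    exact memLp_ballAverage (by norm_num) ENNReal.ofNat_ne_top hε hp hpm.stronglyMeasurable
  have hA_meas : ∀ᶠ ε in 𝓝[>] 0, AEStronglyMeasurable (A ε - p) volume :=
    Eventually.of_forall fun ε => ((stronglyMeasurable_ballAverage hpm.stronglyMeasurable).sub
      hpm.stronglyMeasurable).aestronglyMeasurable
  have hA_tendsto : Tendsto (fun ε => eLpNorm (A ε - p) 3 volume) (𝓝[>] 0) (𝓝 0) :=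
    tendsto_eLpNorm_ballAverage_sub (by norm_num) ENNReal.ofNat_ne_top hp hpm.stronglyMeasurable
  refine (tendsto_integral_mul_of_tendsto_eLpNorm
    (hA_memLp.mono fun ε h => h.comp_of_map_eq_withDensity hX1.aemeasurable hp hd1)
    (hA_memLp.mono fun ε h => h.comp_of_map_eq_withDensity hX2.aemeasurable hp hd2)
    (hp.comp_of_map_eq_withDensity hX1.aemeasurable hp hd1)
    (hp.comp_of_map_eq_withDensity hX2.aemeasurable hp hd2)
    (tendsto_eLpNorm_comp_sub_of_map_eq_withDensity hX1.aemeasurable hp hd1 hA_meas hA_tendsto)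
    (tendsto_eLpNorm_comp_sub_of_map_eq_withDensity hX2.aemeasurable hp hd2 hA_meas
      hA_tendsto)).congr fun ε => ?_
  simp only [A, Function.comp_apply, ballAverage_eq_smul_integral, smul_eq_mul, measureReal_def]
  rw [← integral_div]
  congr 1
  ext ω
  ring

/-- If the common marginal density `p` of `X₁, X₂` is in `L³(ℝ^d)` (and `L²`), then
`E[p_{X,ε}(X₁) p_{X,ε}(X₂)]/b_ε(d)² → E[p(X₁)p(X₂)]` as `ε → 0⁺`, where
`p_{X,ε}(x) = ∫_{B_ε(x)} p` is the ε-ball probability, provided all the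
expectations are well defined. -/
theorem stmt_7 (d : ℕ) (hd : 0 < d) {Ω : Type*} [MeasurableSpace Ω]
    (P : Measure Ω) [IsProbabilityMeasure P]
    (X1 X2 : Ω → EuclideanSpace ℝ (Fin d)) (hX1 : Measurable X1) (hX2 : Measurable X2)
    (p : EuclideanSpace ℝ (Fin d) → ℝ) (hpm : Measurable p) (hpn : ∀ x, 0 ≤ p x)
    (hpi : Integrable p) (hp1 : ∫ x, p x = 1)
    (hp2 : Integrable (fun x => p x ^ 2)) (hp3 : Integrable (fun x => p x ^ 3))
    (hd1 : Measure.map X1 P = volume.withDensity (fun x => ENNReal.ofReal (p x)))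
    (hd2 : Measure.map X2 P = volume.withDensity (fun x => ENNReal.ofReal (p x)))
    (hint : Integrable (fun ω => p (X1 ω) * p (X2 ω)) P)
    (hintε : ∀ ε : ℝ, 0 < ε → Integrable (fun ω =>
      (∫ y in Metric.closedBall (X1 ω) ε, p y) * ∫ y in Metric.closedBall (X2 ω) ε, p y) P) :
    Tendsto (fun ε : ℝ =>
        (∫ ω, (∫ y in Metric.closedBall (X1 ω) ε, p y) *
            (∫ y in Metric.closedBall (X2 ω) ε, p y) ∂P) /
          ((volume (Metric.closedBall (0 : EuclideanSpace ℝ (Fin d)) ε)).toReal) ^ 2)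
      (nhdsWithin 0 (Set.Ioi 0)) (𝓝 (∫ ω, p (X1 ω) * p (X2 ω) ∂P)) :=
  stmt_7_general d P X1 X2 hX1 hX2 p hpm hp3 hd1 hd2
end

section
/- Let p*(x) = A(1 − β(x−μ)^T Σ^{-1}(x−μ)) for x in Ω₀ := {x ∈ ℝ^d : (x−μ)^T Σ^{-1}(x−μ) ≤ 4+d} and p*(x) = 0 otherwise, where β = 1/(4+d), A = Γ(2+d/2) β^{d/2} / (π^{d/2} |Σ|^{1/2}), Σ a symmetric positive-definite d×d matrix, and μ ∈ ℝ^d. Then p* is a probability density, and its quadratic Rényi entropy equals h₂(P*) = −log( 2 Γ(2+d/2)² β^{d/2} / (Γ(3+d/2) π^{d/2} |Σ|^{1/2}) ). -/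
open MeasureTheory Real Matrix Set Module Metric

/-!
Both integrals are integrals of a function of the Mahalanobis form `(x - μ)ᵀ Σ⁻¹ (x - μ)`.
Substituting `x = μ + Σ^{1/2} β^{-1/2} y` turns them into `|Σ|^{1/2} β^{-d/2}` times the integrals
of `(1 - ‖y‖²)₊` and `(1 - ‖y‖²)₊²` over `ℝ^d`, and polar coordinates reduce these to the volume
`π^{d/2} / Γ(d/2 + 1)` of the unit ball times the elementary integrals
`d ∫₀¹ r^{d-1} (1 - r²) dr = 2 / (d + 2)` and `d ∫₀¹ r^{d-1} (1 - r²)² dr = 8 / ((d + 2)(d + 4))`.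
What remains is `Γ(s + 1) = s Γ(s)`.
-/

theorem setIntegral_Ioi_pow_mul_max_one_sub_sq_pow (m : ℕ) {k : ℕ} (hk : k ≠ 0) :
    ∫ r in Ioi (0 : ℝ), r ^ m * max (1 - r ^ 2) 0 ^ k = ∫ r in 0..1, r ^ m * (1 - r ^ 2) ^ k := by
  rw [intervalIntegral.integral_of_le zero_le_one,
    setIntegral_eq_of_subset_of_forall_sdiff_eq_zero measurableSet_Ioi Ioc_subset_Ioi_self]
  · refine setIntegral_congr_fun measurableSet_Ioc fun r hr ↦ ?_
    rw [max_eq_left (by nlinarith [hr.1, hr.2])]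
  · intro r ⟨hr0, hr1⟩
    have : 1 < r := lt_of_not_ge fun h ↦ hr1 ⟨hr0, h⟩
    rw [max_eq_right (by nlinarith), zero_pow hk, mul_zero]

theorem integral_pow_pred_mul_one_sub_sq {n : ℕ} (hn : 0 < n) :
    ∫ r in 0..1, r ^ (n - 1) * (1 - r ^ 2) = 2 / ((n : ℝ) * (n + 2)) := by
  obtain ⟨m, rfl⟩ : ∃ m, n = m + 1 := ⟨n - 1, by omega⟩
  have (r : ℝ) : r ^ m * (1 - r ^ 2) = r ^ m - r ^ (m + 2) := by ring
  simp_rw [Nat.add_sub_cancel, this]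
  rw [intervalIntegral.integral_sub, integral_pow, integral_pow]
  · push_cast
    field_simp
    ring
  all_goals exact Continuous.intervalIntegrable (by fun_prop) _ _

theorem integral_pow_pred_mul_one_sub_sq_sq {n : ℕ} (hn : 0 < n) :
    ∫ r in 0..1, r ^ (n - 1) * (1 - r ^ 2) ^ 2 = 8 / ((n : ℝ) * (n + 2) * (n + 4)) := by
  obtain ⟨m, rfl⟩ : ∃ m, n = m + 1 := ⟨n - 1, by omega⟩
  have (r : ℝ) : r ^ m * (1 - r ^ 2) ^ 2 = r ^ m - 2 * r ^ (m + 2) + r ^ (m + 4) := by ring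
  simp_rw [Nat.add_sub_cancel, this]
  rw [intervalIntegral.integral_add, intervalIntegral.integral_sub,
    intervalIntegral.integral_const_mul, integral_pow, integral_pow, integral_pow]
  · push_cast
    field_simp
    ring
  all_goals exact Continuous.intervalIntegrable (by fun_prop) _ _

section HaarMeasure

variable {E F : Type*} [NormedAddCommGroup E] [NormedSpace ℝ E] [MeasurableSpace E] [BorelSpace E]
  [FiniteDimensional ℝ E] [NormedAddCommGroup F] [NormedSpace ℝ F]
  (μ : Measure E) [μ.IsAddHaarMeasure]

theorem integral_comp_linearMap {f : E →ₗ[ℝ] E} (hf : LinearMap.det f ≠ 0) (g : E → F) :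
    ∫ x, g (f x) ∂μ = |(LinearMap.det f)⁻¹| • ∫ x, g x ∂μ := by
  have hinj : Function.Injective f :=
    ((Module.End.isUnit_iff f).mp ((LinearMap.isUnit_iff_isUnit_det f).mpr hf.isUnit)).injective
  rw [← (LinearMap.isClosedEmbedding_of_injective
      (LinearMap.ker_eq_bot.mpr hinj)).measurableEmbedding.integral_map,
    Measure.map_linearMap_addHaar_eq_smul_addHaar μ hf, integral_smul_measure,
    ENNReal.toReal_ofReal (abs_nonneg _)]

theorem integral_comp_mul_norm_sq {c : ℝ} (hc : 0 < c) (f : ℝ → F) :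
    ∫ x, f (c * ‖x‖ ^ 2) ∂μ = (√c ^ finrank ℝ E)⁻¹ • ∫ x, f (‖x‖ ^ 2) ∂μ := by
  have h := Measure.integral_comp_smul μ (fun x ↦ f (‖x‖ ^ 2)) √c
  simp only [norm_smul, Real.norm_of_nonneg (Real.sqrt_nonneg c), mul_pow,
    Real.sq_sqrt hc.le] at h
  rwa [abs_of_pos (by positivity)] at h

theorem integral_max_one_sub_norm_sq_pow [Nontrivial E] {k : ℕ} (hk : k ≠ 0) :
    ∫ x, max (1 - ‖x‖ ^ 2) 0 ^ k ∂μ =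
      finrank ℝ E * μ.real (ball 0 1) * ∫ r in 0..1, r ^ (finrank ℝ E - 1) * (1 - r ^ 2) ^ k := by
  rw [integral_fun_norm_addHaar μ (fun r ↦ max (1 - r ^ 2) 0 ^ k), nsmul_eq_mul, smul_eq_mul,
    ← setIntegral_Ioi_pow_mul_max_one_sub_sq_pow _ hk, mul_assoc]
  rfl

theorem integral_max_one_sub_norm_sq [Nontrivial E] :
    ∫ x, max (1 - ‖x‖ ^ 2) 0 ∂μ = μ.real (ball 0 1) * (2 / (finrank ℝ E + 2)) := by
  have h := integral_max_one_sub_norm_sq_pow μ one_ne_zero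
  simp only [pow_one] at h
  have hn : (finrank ℝ E : ℝ) ≠ 0 := Nat.cast_ne_zero.2 finrank_pos.ne'
  rw [h, integral_pow_pred_mul_one_sub_sq finrank_pos]
  field_simp

theorem integral_max_one_sub_norm_sq_sq [Nontrivial E] :
    ∫ x, max (1 - ‖x‖ ^ 2) 0 ^ 2 ∂μ =
      μ.real (ball 0 1) * (8 / ((finrank ℝ E + 2) * (finrank ℝ E + 4))) := by
  have hn : (finrank ℝ E : ℝ) ≠ 0 := Nat.cast_ne_zero.2 finrank_pos.ne'
  rw [integral_max_one_sub_norm_sq_pow μ two_ne_zero,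
    integral_pow_pred_mul_one_sub_sq_sq finrank_pos]
  field_simp

end HaarMeasure

theorem InnerProductSpace.volume_real_unitBall {E : Type*} [NormedAddCommGroup E]
    [InnerProductSpace ℝ E] [FiniteDimensional ℝ E] [MeasurableSpace E] [BorelSpace E]
    [Nontrivial E] :
    volume.real (ball (0 : E) 1) = √π ^ finrank ℝ E / Gamma (finrank ℝ E / 2 + 1) := by
  rw [measureReal_def, InnerProductSpace.volume_ball, ENNReal.ofReal_one, one_pow, one_mul,
    ENNReal.toReal_ofReal (by positivity)]

theorem EuclideanSpace.integral_comp_norm_sq {ι F : Type*} [Fintype ι] [NormedAddCommGroup F]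
    [NormedSpace ℝ F] (f : ℝ → F) :
    ∫ y : EuclideanSpace ℝ ι, f (‖y‖ ^ 2) = ∫ u : ι → ℝ, f (u ⬝ᵥ u) := by
  rw [← (EuclideanSpace.volume_preserving_symm_measurableEquiv_toLp ι).integral_comp
    (MeasurableEquiv.toLp 2 (ι → ℝ)).symm.measurableEmbedding]
  simp_rw [EuclideanSpace.real_norm_sq_eq, dotProduct, sq]
  rfl

open scoped MatrixOrder in
theorem Matrix.PosDef.integral_comp_dotProduct_inv_mulVec {ι F : Type*} [Fintype ι] [DecidableEq ι]
    [NormedAddCommGroup F] [NormedSpace ℝ F] {S : Matrix ι ι ℝ} (hS : S.PosDef) (m : ι → ℝ)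
    (f : ℝ → F) :
    ∫ x, f ((x - m) ⬝ᵥ (S⁻¹ *ᵥ (x - m))) = √S.det • ∫ y : EuclideanSpace ℝ ι, f (‖y‖ ^ 2) := by
  set B := CFC.sqrt S
  have hBdet : B.det = √S.det := by simpa using hS.posSemidef.det_sqrt
  have hBpos : 0 < B.det := hBdet ▸ Real.sqrt_pos.2 hS.det_pos
  have hBsymm : Bᵀ = B := (CFC.sqrt_nonneg S).posSemidef.isHermitian
  have hSinv : S⁻¹ = B⁻¹ * B⁻¹ := by
    rw [← Matrix.mul_inv_rev, CFC.sqrt_mul_sqrt_self S hS.posSemidef.nonneg]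
  have hquad (u : ι → ℝ) : (B *ᵥ u) ⬝ᵥ (S⁻¹ *ᵥ (B *ᵥ u)) = u ⬝ᵥ u := by
    have hBu : B *ᵥ u = u ᵥ* B := by rw [← mulVec_transpose, hBsymm]
    rw [hBu, ← dotProduct_mulVec, ← hBu, mulVec_mulVec, mulVec_mulVec, hSinv, ← Matrix.mul_assoc,
      Matrix.mul_nonsing_inv _ hBpos.ne'.isUnit, Matrix.one_mul,
      Matrix.nonsing_inv_mul _ hBpos.ne'.isUnit, one_mulVec]
  have hcov := integral_comp_linearMap volume (f := toLin' B)
    (by rw [LinearMap.det_toLin']; exact hBpos.ne') (fun x ↦ f (x ⬝ᵥ (S⁻¹ *ᵥ x)))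
  simp only [toLin'_apply, LinearMap.det_toLin', hquad, abs_inv, abs_of_pos hBpos] at hcov
  rw [integral_sub_right_eq_self (fun x ↦ f (x ⬝ᵥ (S⁻¹ *ᵥ x))) m,
    EuclideanSpace.integral_comp_norm_sq, hcov, smul_smul, ← hBdet, mul_inv_cancel₀ hBpos.ne',
    one_smul]

theorem Matrix.PosDef.integral_comp_mul_dotProduct_inv_mulVec {ι : Type*} [Fintype ι]
    [DecidableEq ι] {S : Matrix ι ι ℝ} (hS : S.PosDef) (m : ι → ℝ) {c : ℝ} (hc : 0 < c)
    (f : ℝ → ℝ) :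
    ∫ x, f (c * ((x - m) ⬝ᵥ (S⁻¹ *ᵥ (x - m)))) =
      √S.det * (√c ^ Fintype.card ι)⁻¹ * ∫ y : EuclideanSpace ℝ ι, f (‖y‖ ^ 2) := by
  rw [hS.integral_comp_dotProduct_inv_mulVec m (fun t ↦ f (c * t)),
    integral_comp_mul_norm_sq volume hc, finrank_euclideanSpace, smul_eq_mul, smul_eq_mul,
    mul_assoc]

theorem ite_le_mul_one_sub_inv_mul_eq_mul_max {c : ℝ} (hc : 0 < c) (a t : ℝ) :
    (if t ≤ c then a * (1 - c⁻¹ * t) else 0) = a * max (1 - c⁻¹ * t) 0 := by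
  have hpos : 0 ≤ 1 - c⁻¹ * t ↔ t ≤ c := by rw [sub_nonneg, inv_mul_le_iff₀ hc, mul_one]
  split_ifs with h
  · rw [max_eq_left (hpos.2 h)]
  · rw [max_eq_right (not_le.1 (mt hpos.1 h)).le, mul_zero]

/-- The Pearson type II (Student-r) function
`p*(x) = A(1 − β(x−μ)ᵀΣ⁻¹(x−μ))` on `Ω₀ = {x : (x−μ)ᵀΣ⁻¹(x−μ) ≤ 4+d}`,
with `β = 1/(4+d)` and `A = Γ(2+d/2)β^{d/2}/(π^{d/2}|Σ|^{1/2})`, is a probability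
density whose quadratic Rényi entropy equals
`−log(2Γ(2+d/2)²β^{d/2}/(Γ(3+d/2)π^{d/2}|Σ|^{1/2}))`. -/
theorem stmt_14 (d : ℕ) (hd : 0 < d) (μv : Fin d → ℝ)
    (S : Matrix (Fin d) (Fin d) ℝ) (hS : S.PosDef)
    (β A : ℝ) (hβ : β = (4 + (d : ℝ))⁻¹)
    (hA : A = Real.Gamma (2 + (d : ℝ) / 2) * β ^ ((d : ℝ) / 2) /
      (π ^ ((d : ℝ) / 2) * Real.sqrt S.det))
    (pstar : (Fin d → ℝ) → ℝ)
    (hpstar : pstar = fun x =>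
      if (x - μv) ⬝ᵥ (S⁻¹ *ᵥ (x - μv)) ≤ 4 + (d : ℝ) then
        A * (1 - β * ((x - μv) ⬝ᵥ (S⁻¹ *ᵥ (x - μv))))
      else 0) :
    (∀ x, 0 ≤ pstar x) ∧ (∫ x, pstar x) = 1 ∧
    -Real.log (∫ x, pstar x ^ 2) =
      -Real.log (2 * Real.Gamma (2 + (d : ℝ) / 2) ^ 2 * β ^ ((d : ℝ) / 2) /
        (Real.Gamma (3 + (d : ℝ) / 2) * π ^ ((d : ℝ) / 2) * Real.sqrt S.det)) := by
  have : Nonempty (Fin d) := ⟨⟨0, hd⟩⟩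
  have hβ0 : 0 < β := hβ ▸ by positivity
  have hp (x) : pstar x = A * max (1 - β * ((x - μv) ⬝ᵥ (S⁻¹ *ᵥ (x - μv)))) 0 := by
    rw [hpstar, hβ]; exact ite_le_mul_one_sub_inv_mul_eq_mul_max (by positivity) A _
  have hball := InnerProductSpace.volume_real_unitBall (E := EuclideanSpace ℝ (Fin d))
  rw [finrank_euclideanSpace_fin] at hball
  have hΓ2 : Gamma (2 + d / 2) = (d / 2 + 1) * Gamma (d / 2 + 1) := by
    rw [show (2 : ℝ) + d / 2 = d / 2 + 1 + 1 by ring, Real.Gamma_add_one (by positivity)]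
  have hΓ3 : Gamma (3 + d / 2) = (2 + d / 2) * Gamma (2 + d / 2) := by
    rw [show (3 : ℝ) + d / 2 = 2 + d / 2 + 1 by ring, Real.Gamma_add_one (by positivity)]
  have hdet : 0 < √S.det := Real.sqrt_pos.2 hS.det_pos
  rw [rpow_div_two_eq_sqrt _ hβ0.le, rpow_div_two_eq_sqrt _ pi_pos.le, rpow_natCast,
    rpow_natCast] at hA ⊢
  refine ⟨fun x ↦ ?_, ?_, ?_⟩
  · rw [hp, hA]; positivity
  · simp_rw [hp, integral_const_mul]
    rw [hS.integral_comp_mul_dotProduct_inv_mulVec μv hβ0 (fun t ↦ max (1 - t) 0),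
      integral_max_one_sub_norm_sq,
      Fintype.card_fin, finrank_euclideanSpace_fin, hball, hA, hΓ2]
    field_simp
  · congr 2
    simp_rw [hp, mul_pow, integral_const_mul]
    rw [hS.integral_comp_mul_dotProduct_inv_mulVec μv hβ0 (fun t ↦ max (1 - t) 0 ^ 2),
      integral_max_one_sub_norm_sq_sq, Fintype.card_fin, finrank_euclideanSpace_fin, hball, hA,
      hΓ3, hΓ2]
    field_simp
    ring
end
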